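/- arXiv:2207.05678 — 5 statements merged into one kernel-verified Lean document; each statement's English description precedes it below -/
import Mathlib

section
/- Let α be a type, S₀ ⊆ α a set, R : ℕ → Set (α × α) a family of transition constraints, and P : ℕ → Set α → Set α a family of pruning operations that is sound, i.e., for all t and all S ⊆ α, S ⊆ P t S. Define M : ℕ → Set α by M 0 = P 0 S₀ and M (t+1) = P (t+1) { y | ∃ x ∈ M t, (x, y) ∈ R t }. Then for every T : ℕ, { a | ∃ σ : ℕ → α, σ 0 ∈ S₀ ∧ (∀ t < T, (σ t, σ (t+1)) ∈ R t) ∧ σ T = a } ⊆ M T. (Semantic content of Theorem 1, sound case: a forward monitoring recursion with sound pruning never excludes a value of the time-T instant variables that is consistent with the accumulated constraints Φ^T, hence the monitor is sound.) -/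
/-- Semantic content of Theorem 1 (sound case): a forward monitoring recursion with
sound pruning never excludes a value of the time-`T` instant variables consistent
with the accumulated constraints `Φ^T`. -/
theorem symbolic_monitor_sound {α : Type*}
    (S₀ : Set α) (R : ℕ → Set (α × α))
    (P : ℕ → Set α → Set α) (hP : ∀ t (S : Set α), S ⊆ P t S)
    (M : ℕ → Set α)
    (hM0 : M 0 = P 0 S₀)
    (hMs : ∀ t : ℕ, M (t + 1) = P (t + 1) { y | ∃ x ∈ M t, (x, y) ∈ R t }) :
    ∀ T : ℕ, { a | ∃ σ : ℕ → α,
      σ 0 ∈ S₀ ∧ (∀ t < T, (σ t, σ (t + 1)) ∈ R t) ∧ σ T = a } ⊆ M T := by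
  intro T
  induction T with
  | zero =>
    rintro a ⟨σ, h0, _, rfl⟩
    rw [hM0]; exact hP 0 S₀ h0
  | succ T ih =>
    rintro a ⟨σ, h0, hR, rfl⟩
    rw [hMs]
    apply hP
    exact ⟨σ T, ih ⟨σ, h0, fun t ht => hR t (ht.trans (Nat.lt_succ_self T)), rfl⟩,
      hR T (Nat.lt_succ_self T)⟩
end

section
/- Let α be a nonempty type, l : ℕ, and K : ℕ → Set (Fin (l+1) → α) a family of window constraints, where K t constrains the window (σ t, σ (t+1), …, σ (t+l)) of a trajectory σ : ℕ → α. For σ : ℕ → α write win σ t : Fin (l+1) → α for the function j ↦ σ (t + j). Define N : ℕ → Set (Fin (l+1) → α) by N 0 = K 0 and N (t+1) = { w ∈ K (t+1) | ∃ w' ∈ N t, the last l coordinates of w' agree with the first l coordinates of w, i.e. ∀ j : Fin l, w' (j+1) = w j }. Then for every T : ℕ, N T = { w | ∃ σ : ℕ → α, (∀ t ≤ T, win σ t ∈ K t) ∧ w = win σ T }. -/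
/-- Semantic content of Theorem 2 (perfect case): the `l`-lookback forward recursion
over windows of length `l+1` computes exactly the set of time-`T` windows consistent
with all constraints up to index `T`. -/
theorem lookback_monitor_perfect {α : Type*} [Nonempty α] (l : ℕ)
    (K : ℕ → Set (Fin (l + 1) → α)) (N : ℕ → Set (Fin (l + 1) → α))
    (hN0 : N 0 = K 0)
    (hNs : ∀ t : ℕ, N (t + 1) =
      { w | w ∈ K (t + 1) ∧ ∃ w' ∈ N t, ∀ j : Fin l, w' j.succ = w j.castSucc }) :
    ∀ T : ℕ, N T = { w | ∃ σ : ℕ → α,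
      (∀ t ≤ T, (fun j : Fin (l + 1) => σ (t + (j : ℕ))) ∈ K t) ∧
      w = fun j : Fin (l + 1) => σ (T + (j : ℕ)) } := by
  intro T
  induction T with
  | zero =>
    rw [hN0]
    ext w
    constructor
    · intro hw
      refine ⟨fun n => if h : n ≤ l then w ⟨n, by omega⟩ else Classical.arbitrary α, ?_, ?_⟩
      · intro t ht
        interval_cases t
        convert hw using 2 with j
        have hj : (j : ℕ) ≤ l := by omega
        simp [hj]
      · funext j
        have hj : (j : ℕ) ≤ l := by omega
        simp [hj]
    · rintro ⟨σ, hσ, rfl⟩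
      simpa using hσ 0 le_rfl
  | succ T ih =>
    rw [hNs T, ih]
    ext w
    constructor
    · rintro ⟨hwK, w', ⟨σ, hσ, rfl⟩, hcompat⟩
      refine ⟨fun n => if h : n ≤ T + l then σ n else w ⟨l, by omega⟩, ?_, ?_⟩
      · intro t ht
        rcases Nat.lt_or_ge t (T + 1) with h | h
        · have := hσ t (by omega)
          convert this using 2 with j
          have : t + (j : ℕ) ≤ T + l := by omega
          simp [this]
        · have ht' : t = T + 1 := by omega
          subst ht'
          convert hwK using 2 with j
          rcases Nat.lt_or_ge (j : ℕ) l with hj | hj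
          · have h1 : T + 1 + (j : ℕ) ≤ T + l := by omega
            simp only [h1, dif_pos]
            have := hcompat ⟨j, hj⟩
            simp only [Fin.succ, Fin.castSucc, Fin.castAdd, Fin.castLE] at this
            rw [show T + 1 + (j : ℕ) = T + ((j : ℕ) + 1) by omega]
            rw [this]
          · have hj' : (j : ℕ) = l := by omega
            have h1 : ¬ (T + 1 + (j : ℕ) ≤ T + l) := by omega
            simp only [h1, dif_neg, not_false_iff]
            congr 1
            ext
            simp [hj']
      · funext j
        rcases Nat.lt_or_ge (j : ℕ) l with hj | hj
        · have h1 : T + 1 + (j : ℕ) ≤ T + l := by omega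
          simp only [h1, dif_pos]
          have := hcompat ⟨j, hj⟩
          simp only [Fin.succ, Fin.castSucc, Fin.castAdd, Fin.castLE] at this
          rw [show T + 1 + (j : ℕ) = T + ((j : ℕ) + 1) by omega, this]
        · have hj' : (j : ℕ) = l := by omega
          have h1 : ¬ (T + 1 + (j : ℕ) ≤ T + l) := by omega
          simp only [h1, dif_neg, not_false_iff]
          congr 1
          ext
          simp [hj']
    · rintro ⟨σ, hσ, rfl⟩
      refine ⟨hσ (T + 1) le_rfl, fun j : Fin (l + 1) => σ (T + (j : ℕ)),
        ⟨σ, fun t ht => hσ t (by omega), rfl⟩, ?_⟩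
      intro j
      simp only [Fin.val_succ, Fin.coe_castSucc]
      ring_nf
end

section
/- Let α be a type, l : ℕ, K : ℕ → Set (Fin (l+1) → α) a family of window constraints, and P : ℕ → Set (Fin (l+1) → α) → Set (Fin (l+1) → α) a family of pruning operations that is sound, i.e., for all t and all S, S ⊆ P t S. For σ : ℕ → α write win σ t : Fin (l+1) → α for the function j ↦ σ (t + j). Define N : ℕ → Set (Fin (l+1) → α) by N 0 = P 0 (K 0) and N (t+1) = P (t+1) { w ∈ K (t+1) | ∃ w' ∈ N t, the last l coordinates of w' agree with the first l coordinates of w }. Then for every T : ℕ, { w | ∃ σ : ℕ → α, (∀ t ≤ T, win σ t ∈ K t) ∧ w = win σ T } ⊆ N T. (Semantic content of Theorem 2, sound case: an l-lookback forward recursion with sound pruning never excludes a time-T window consistent with all constraints up to index T.) -/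
/-- Semantic content of Theorem 2 (sound case): an `l`-lookback forward recursion
with sound pruning never excludes a time-`T` window consistent with all constraints
up to index `T`. -/
theorem lookback_monitor_sound {α : Type*} (l : ℕ)
    (K : ℕ → Set (Fin (l + 1) → α))
    (P : ℕ → Set (Fin (l + 1) → α) → Set (Fin (l + 1) → α))
    (hP : ∀ t (S : Set (Fin (l + 1) → α)), S ⊆ P t S)
    (N : ℕ → Set (Fin (l + 1) → α))
    (hN0 : N 0 = P 0 (K 0))
    (hNs : ∀ t : ℕ, N (t + 1) = P (t + 1)
      { w | w ∈ K (t + 1) ∧ ∃ w' ∈ N t, ∀ j : Fin l, w' j.succ = w j.castSucc }) :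
    ∀ T : ℕ, { w | ∃ σ : ℕ → α,
      (∀ t ≤ T, (fun j : Fin (l + 1) => σ (t + (j : ℕ))) ∈ K t) ∧
      w = fun j : Fin (l + 1) => σ (T + (j : ℕ)) } ⊆ N T := by
  intro T
  induction T with
  | zero =>
    rintro w ⟨σ, hK, rfl⟩
    rw [hN0]
    exact hP 0 _ (hK 0 le_rfl)
  | succ T ih =>
    rintro w ⟨σ, hK, rfl⟩
    rw [hNs]
    apply hP
    refine ⟨hK (T + 1) le_rfl, (fun j : Fin (l + 1) => σ (T + (j : ℕ))), ?_, ?_⟩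
    · exact ih ⟨σ, fun t ht => hK t (ht.trans (Nat.le_succ _)), rfl⟩
    · intro j
      simp [Fin.val_succ, Fin.coe_castSucc]
      ring_nf
end

section
/- Let p, q : ℕ, let A be a real p × q matrix, b : Fin p → ℝ, and let W = { x : Fin q → ℝ | A.mulVec x = b }. Let T ⊆ W be a nonempty bounded set. Then there exist k ≤ q, a real q × k matrix N, a vector o : Fin q → ℝ, and bounds l, g : Fin k → ℝ such that (i) for every u : Fin k → ℝ, N.mulVec u + o ∈ W, and (ii) T ⊆ (fun u => N.mulVec u + o) '' { u | ∀ i, l i ≤ u i ∧ u i ≤ g i }. (Real-valued part of Lemma 3: the Lola_𝔹/𝓛𝓐 pruning strategy is sound and constant: a bounded set of admissible real value combinations satisfying linear equations admits a constant-size sound over-approximation, namely the image under an affine map of a box of fresh variables, which still satisfies all the linear equations.) -/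
/-!
Fix a point `o ∈ T` and a linear projection `P` of `ℝ^q` onto `ker A`. The affine map
`u ↦ P u + o` lands in the solution set `W = o + ker A`, and it sends `x - o` back to `x` for
every `x ∈ W`, since `x - o ∈ ker A`. A bounded set of `ℝ^q` lies between two vectors `lo ≤ hi`,
so the `x - o` with `x ∈ T` lie in the box `[lo - o, hi - o]`.
-/

theorem Submodule.exists_isProj {K E : Type*} [DivisionRing K] [AddCommGroup E] [Module K E]
    (p : Submodule K E) : ∃ f : E →ₗ[K] E, LinearMap.IsProj p f :=
  let ⟨_, hq⟩ := p.exists_isCompl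
  ⟨p.projection _ hq, projection_apply_mem hq, fun _ ↦ projection_apply_of_mem_left hq⟩

/-- Real-valued part of Lemma 3 (the `Lola_𝔹/𝓛𝓐` pruning strategy is sound and
constant): a nonempty bounded set `T` of admissible real value combinations contained
in the solution set `W` of a linear system admits a sound over-approximation given by
the image under an affine map (into `W`) of a box of at most `q` fresh variables. -/
theorem lolaBLA_pruning_sound_constant (p q : ℕ)
    (A : Matrix (Fin p) (Fin q) ℝ) (b : Fin p → ℝ)
    (T : Set (Fin q → ℝ)) (hT : T.Nonempty)
    (hTW : T ⊆ { x : Fin q → ℝ | A.mulVec x = b })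
    (hbdd : Bornology.IsBounded T) :
    ∃ k ≤ q, ∃ N : Matrix (Fin q) (Fin k) ℝ, ∃ o : Fin q → ℝ, ∃ l g : Fin k → ℝ,
      (∀ u : Fin k → ℝ, N.mulVec u + o ∈ { x : Fin q → ℝ | A.mulVec x = b }) ∧
      T ⊆ (fun u : Fin k → ℝ => N.mulVec u + o) ''
            { u : Fin k → ℝ | ∀ i, l i ≤ u i ∧ u i ≤ g i } := by
  obtain ⟨o, hoT⟩ := hT
  have hob : A.mulVec o = b := hTW hoT
  obtain ⟨P, hP⟩ := (LinearMap.ker A.mulVecLin).exists_isProj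
  obtain ⟨lo, hlo⟩ := hbdd.bddBelow
  obtain ⟨hi, hhi⟩ := hbdd.bddAbove
  refine ⟨q, le_rfl, LinearMap.toMatrix' P, o, lo - o, hi - o, fun u ↦ ?_,
    fun x hx ↦ ⟨x - o, fun i ↦ ⟨?_, ?_⟩, ?_⟩⟩
  · have hPu : A.mulVec (P u) = 0 := hP.map_mem u
    simp [LinearMap.toMatrix'_mulVec, Matrix.mulVec_add, hPu, hob]
  · exact sub_le_sub_right (hlo hx i) (o i)
  · exact sub_le_sub_right (hhi hx i) (o i)
  · have hxo : x - o ∈ LinearMap.ker A.mulVecLin := by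
      have hxb : A.mulVec x = b := hTW hx
      simp [Matrix.mulVec_sub, hxb, hob]
    simp [LinearMap.toMatrix'_mulVec, hP.map_id _ hxo]
end

section
/- Let n ≥ 1 and let v : Fin n → ℝ × ℝ be vectors such that v i ≠ 0 for all i and no two are parallel (for i ≠ j there is no c : ℝ with v i = c • v j). Let Z = { ∑ i, t i • v i | t : Fin n → ℝ, ∀ i, 0 ≤ t i ∧ t i ≤ 1 } be the zonotope generated by v. Then the set of extreme points of Z (in the sense of convexity over ℝ) is finite and has exactly 2·n elements. (This is the geometric fact underlying the paper's counterexample: a planar zonotope generated by n pairwise non-parallel vectors is a polygon with 2n vertices, so its description size grows linearly in n.) -/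
/-!
A point of the zonotope `∑ᵢ [0, 1] • vᵢ` is extreme iff it is `∑_{i ∈ S} vᵢ` with
`S = {i | 0 < f vᵢ}` for a continuous linear functional `f` vanishing at no `vᵢ`: such a point is
the unique maximiser of `f` on the zonotope. Conversely, an extreme point has all coefficients
`tᵢ ∈ {0, 1}`, and if no functional were positive on all of `(2 tᵢ - 1) • vᵢ = ±vᵢ`, Gordan's
alternative would give a convex combination of these vectors equal to `0`, which rewrites the
point with a fractional coefficient. The same maximisation shows that distinct sign patterns `S`
give distinct points.

In the plane the sign patterns are counted by induction on the number of vectors: a pattern of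
the other vectors extends to `vₐ` with sign `+`, with sign `-`, or both, and it extends both ways
iff it is the pattern of a functional vanishing at `vₐ`, i.e. of `±(vₐ × ·)`. So each vector adds
two patterns, starting from two for a single vector.
-/

open Finset Filter Topology

variable {ι E : Type*}

section Real

lemma mul_le_ite_pos {t a : ℝ} (ht : 0 ≤ t ∧ t ≤ 1) : t * a ≤ if 0 < a then a else 0 := by
  split_ifs <;> nlinarith

lemma filter_pos_eq_of_forall_mul_pos {I : Finset ι} {a b : ι → ℝ}
    (h : ∀ i ∈ I, 0 < a i * b i) : {i ∈ I | 0 < b i} = {i ∈ I | 0 < a i} :=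
  filter_congr fun i hi => by
    rcases pos_and_pos_or_neg_and_neg_of_mul_pos (h i hi) with ⟨ha, hb⟩ | ⟨ha, hb⟩
    · simp [ha, hb]
    · simp [ha.not_gt, hb.not_gt]

lemma forall_mul_pos_of_filter_pos_eq {I : Finset ι} {a b : ι → ℝ} (ha : ∀ i ∈ I, a i ≠ 0)
    (hb : ∀ i ∈ I, b i ≠ 0) (h : {i ∈ I | 0 < a i} = {i ∈ I | 0 < b i}) :
    ∀ i ∈ I, 0 < a i * b i := by
  intro i hi
  have hab : 0 < a i ↔ 0 < b i := by simpa [hi] using congrArg (i ∈ ·) h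
  rcases (ha i hi).lt_or_gt with ha' | ha'
  · exact mul_pos_of_neg_of_neg ha' ((hb i hi).lt_of_le (not_lt.1 (hab.not.1 ha'.not_gt)))
  · exact mul_pos ha' (hab.1 ha')

lemma filter_pos_ne_filter_neg_pos {I : Finset ι} (hI : I.Nonempty) {a : ι → ℝ}
    (ha : ∀ i ∈ I, a i ≠ 0) : {i ∈ I | 0 < a i} ≠ {i ∈ I | 0 < -a i} := by
  obtain ⟨i, hi⟩ := hI
  intro h
  have : 0 < a i ↔ 0 < -a i := by simpa [hi] using congrArg (i ∈ ·) h
  rcases (ha i hi).lt_or_gt with h' | h'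
  · linarith [this.2 (neg_pos.2 h')]
  · linarith [this.1 h']

variable [Fintype ι] {t a : ι → ℝ}

lemma sum_mul_le_sum_filter_pos (ht : ∀ i, 0 ≤ t i ∧ t i ≤ 1) :
    ∑ i, t i * a i ≤ ∑ i with 0 < a i, a i := by
  rw [sum_filter]
  exact sum_le_sum fun i _ => mul_le_ite_pos (ht i)

lemma eq_ite_of_sum_mul_eq_sum_filter_pos (ha : ∀ i, a i ≠ 0) (ht : ∀ i, 0 ≤ t i ∧ t i ≤ 1)
    (h : ∑ i, t i * a i = ∑ i with 0 < a i, a i) (i : ι) :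
    t i = if 0 < a i then 1 else 0 := by
  rw [sum_filter] at h
  have hi := (sum_eq_sum_iff_of_le fun i _ => mul_le_ite_pos (ht i)).1 h i (mem_univ i)
  split_ifs at hi ⊢
  · exact (mul_eq_right₀ (ha i)).1 hi
  · exact (mul_eq_zero.1 hi).resolve_right (ha i)

end Real

section Zonotope

variable [AddCommGroup E] [Module ℝ E]

def zonotope [Fintype ι] (v : ι → E) : Set E :=
  {z | ∃ t : ι → ℝ, (∀ i, 0 ≤ t i ∧ t i ≤ 1) ∧ z = ∑ i, t i • v i}

variable [Fintype ι] {v : ι → E}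

lemma sum_filter_eq_sum_ite_smul (p : ι → Prop) [DecidablePred p] :
    ∑ i with p i, v i = ∑ i, (if p i then (1 : ℝ) else 0) • v i := by
  simp [sum_filter, ite_smul]

lemma sum_filter_mem_zonotope (p : ι → Prop) [DecidablePred p] :
    ∑ i with p i, v i ∈ zonotope v :=
  ⟨_, fun i => by split_ifs <;> norm_num, sum_filter_eq_sum_ite_smul p⟩

lemma sum_smul_add_smul_mem_zonotope [DecidableEq ι] {t : ι → ℝ} (ht : ∀ i, 0 ≤ t i ∧ t i ≤ 1)
    {j : ι} {s : ℝ} (hs : 0 ≤ t j + s ∧ t j + s ≤ 1) :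
    ∑ i, t i • v i + s • v j ∈ zonotope v := by
  refine ⟨t + Pi.single j s, fun i => ?_, ?_⟩
  · rcases eq_or_ne i j with rfl | hij
    · simpa using hs
    · simpa [hij] using ht i
  · simp [add_smul, sum_add_distrib, Pi.single_apply, ite_smul]

lemma eq_zero_or_eq_one_of_sum_smul_mem_extremePoints {t : ι → ℝ}
    (ht : ∀ i, 0 ≤ t i ∧ t i ≤ 1) (hx : ∑ i, t i • v i ∈ (zonotope v).extremePoints ℝ)
    {j : ι} (hj : v j ≠ 0) : t j = 0 ∨ t j = 1 := by
  classical
  by_contra! htj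
  set ε := min (t j) (1 - t j)
  have hε : 0 < ε := lt_min ((ht j).1.lt_of_ne' htj.1) (sub_pos.2 ((ht j).2.lt_of_ne htj.2))
  have hεle : ε ≤ t j ∧ ε ≤ 1 - t j := ⟨min_le_left _ _, min_le_right _ _⟩
  have hseg : ∑ i, t i • v i ∈ openSegment ℝ (∑ i, t i • v i + (-ε) • v j)
      (∑ i, t i • v i + ε • v j) :=
    ⟨1 / 2, 1 / 2, by norm_num, by norm_num, by norm_num, by module⟩
  have heq := hx.2 (sum_smul_add_smul_mem_zonotope ht (by constructor <;> linarith))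
    (sum_smul_add_smul_mem_zonotope ht (by constructor <;> linarith)) hseg
  simp [hε.ne', hj] at heq

end Zonotope

section SignPatterns

variable [AddCommGroup E] [Module ℝ E] [TopologicalSpace E] {v : ι → E}

def signPatterns (v : ι → E) (I : Finset ι) : Set (Finset ι) :=
  {S | ∃ f : StrongDual ℝ E, (∀ i ∈ I, f (v i) ≠ 0) ∧ {i ∈ I | 0 < f (v i)} = S}

def signPatternsPosAt (v : ι → E) (I : Finset ι) (x : E) : Set (Finset ι) :=
  {S | ∃ f : StrongDual ℝ E, (∀ i ∈ I, f (v i) ≠ 0) ∧ 0 < f x ∧ {i ∈ I | 0 < f (v i)} = S}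

lemma signPatterns_finite (v : ι → E) (I : Finset ι) : (signPatterns v I).Finite :=
  I.powerset.finite_toSet.subset fun _ ⟨_, _, hS⟩ => mem_powerset.2 (hS ▸ filter_subset _ _)

lemma signPatternsPosAt_subset (I : Finset ι) (x : E) :
    signPatternsPosAt v I x ⊆ signPatterns v I :=
  fun _ ⟨f, hf, _, hS⟩ => ⟨f, hf, hS⟩

lemma sum_filter_pos_mem_exposedPoints [Fintype ι] {f : StrongDual ℝ E}
    (hf : ∀ i, f (v i) ≠ 0) :
    ∑ i with 0 < f (v i), v i ∈ (zonotope v).exposedPoints ℝ := by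
  refine ⟨sum_filter_mem_zonotope _, f, ?_⟩
  rintro _ ⟨t, ht, rfl⟩
  have hft : f (∑ i, t i • v i) = ∑ i, t i * f (v i) := by simp [map_sum]
  have hfx : f (∑ i with 0 < f (v i), v i) = ∑ i with 0 < f (v i), f (v i) := map_sum _ _ _
  rw [hft, hfx]
  refine ⟨sum_mul_le_sum_filter_pos ht, fun hle => ?_⟩
  have hteq := eq_ite_of_sum_mul_eq_sum_filter_pos hf ht
    (hle.antisymm' (sum_mul_le_sum_filter_pos ht))
  rw [sum_filter_eq_sum_ite_smul]
  exact sum_congr rfl fun i _ => by rw [hteq i]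

lemma injOn_sum_signPatterns [Fintype ι] :
    Set.InjOn (fun S : Finset ι => ∑ i ∈ S, v i) (signPatterns v univ) := by
  classical
  rintro _ ⟨f, hf, rfl⟩ S - hS
  have hfS : ∑ i, (if i ∈ S then (1 : ℝ) else 0) * f (v i) = ∑ i with 0 < f (v i), f (v i) := by
    have := congrArg f hS
    simp only [map_sum] at this
    simp [this, ite_mul, sum_ite_mem]
  have h := eq_ite_of_sum_mul_eq_sum_filter_pos (fun i => hf i (mem_univ i))
    (fun i => by split_ifs <;> norm_num) hfS
  ext i
  have hi := h i
  by_cases h1 : i ∈ S <;> by_cases h2 : 0 < f (v i) <;> simp [h1, h2] at hi ⊢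

lemma eventually_forall_mul_add_smul_apply_pos {I : Finset ι} {f : StrongDual ℝ E}
    (hf : ∀ i ∈ I, f (v i) ≠ 0) (g : StrongDual ℝ E) :
    ∀ᶠ ε in 𝓝 (0 : ℝ), ∀ i ∈ I, 0 < f (v i) * (f + ε • g) (v i) := by
  refine (eventually_all_finset I).2 fun i hi => ?_
  have hcont : Continuous fun ε : ℝ => f (v i) * (f + ε • g) (v i) := by
    simp only [_root_.add_apply, _root_.smul_apply, smul_eq_mul]
    fun_prop
  exact hcont.continuousAt.eventually (lt_mem_nhds (by simpa using mul_self_pos.2 (hf i hi)))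

lemma filter_pos_mem_signPatternsPosAt {I : Finset ι} {f g : StrongDual ℝ E} {x : E}
    (hf : ∀ i ∈ I, f (v i) ≠ 0) (hfx : 0 ≤ f x) (hgx : 0 < g x) :
    {i ∈ I | 0 < f (v i)} ∈ signPatternsPosAt v I x := by
  obtain ⟨ε, hε, hε0⟩ := ((eventually_forall_mul_add_smul_apply_pos hf g).filter_mono
    nhdsWithin_le_nhds |>.and self_mem_nhdsWithin).exists (f := 𝓝[>] (0 : ℝ))
  refine ⟨f + ε • g, fun i hi => right_ne_zero_of_mul (hε i hi).ne', ?_,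
    filter_pos_eq_of_forall_mul_pos hε⟩
  simpa using add_pos_of_nonneg_of_pos hfx (mul_pos hε0 hgx)

lemma signPatterns_cons [DecidableEq ι] {s : Finset ι} {a : ι} (ha : a ∉ s) :
    signPatterns v (s.cons a ha) =
      insert a '' signPatternsPosAt v s (v a) ∪ signPatternsPosAt v s (-v a) := by
  ext S
  constructor
  · rintro ⟨f, hf, rfl⟩
    have hfs : ∀ i ∈ s, f (v i) ≠ 0 := fun i hi => hf i (mem_cons_of_mem hi)
    rw [filter_cons, cons_eq_insert]
    split_ifs with hpos
    · exact Or.inl ⟨_, ⟨f, hfs, hpos, rfl⟩, rfl⟩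
    · refine Or.inr ⟨f, hfs, ?_, rfl⟩
      simpa using (hf a (mem_cons_self a s)).lt_of_le (not_lt.1 hpos)
  · rintro (⟨_, ⟨f, hf, hpos, rfl⟩, rfl⟩ | ⟨f, hf, hneg, rfl⟩)
    · refine ⟨f, (forall_mem_cons ha _).2 ⟨hpos.ne', hf⟩, ?_⟩
      rw [filter_cons, if_pos hpos, cons_eq_insert]
    · refine ⟨f, (forall_mem_cons ha _).2 ⟨by simpa using hneg.ne', hf⟩, ?_⟩
      rw [filter_cons, if_neg (by simpa using hneg.le)]

lemma ncard_signPatterns_cons [DecidableEq ι] {s : Finset ι} {a : ι} (ha : a ∉ s) :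
    (signPatterns v (s.cons a ha)).ncard =
      (signPatternsPosAt v s (v a)).ncard + (signPatternsPosAt v s (-v a)).ncard := by
  have hsub (x : E) : ∀ T ∈ signPatternsPosAt v s x, a ∉ T := by
    rintro _ ⟨f, -, -, rfl⟩ haT
    exact ha (mem_filter.1 haT).1
  have hfin (x : E) := (signPatterns_finite v s).subset (signPatternsPosAt_subset s x)
  have hinj : Set.InjOn (insert a) (signPatternsPosAt v s (v a)) := fun T hT T' hT' h => by
    simpa [erase_insert (hsub _ T hT), erase_insert (hsub _ T' hT')] using congrArg (·.erase a) h
  have hdisj :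
      Disjoint (insert a '' signPatternsPosAt v s (v a)) (signPatternsPosAt v s (-v a)) := by
    rw [Set.disjoint_left]
    rintro _ ⟨T, -, rfl⟩ hT
    exact hsub _ _ hT (mem_insert_self a T)
  rw [signPatterns_cons, Set.ncard_union_eq hdisj ((hfin _).image _) (hfin _), hinj.ncard_image]

end SignPatterns

section HahnBanach

variable [AddCommGroup E] [Module ℝ E] [TopologicalSpace E] [IsTopologicalAddGroup E]
  [ContinuousSMul ℝ E] [LocallyConvexSpace ℝ E]

lemma exists_forall_pos_or_exists_stdSimplex [T2Space E] [Fintype ι] (w : ι → E) :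
    (∃ f : StrongDual ℝ E, ∀ i, 0 < f (w i)) ∨
      ∃ μ ∈ stdSimplex ℝ ι, ∑ i, μ i • w i = 0 := by
  classical
  set K := Fintype.linearCombination ℝ w '' stdSimplex ℝ ι
  by_cases h0 : (0 : E) ∈ K
  · obtain ⟨μ, hμ, hμ0⟩ := h0
    exact Or.inr ⟨μ, hμ, by simpa [Fintype.linearCombination_apply] using hμ0⟩
  have hK : IsCompact K := (isCompact_stdSimplex ℝ ι).image
    (Fintype.linearCombination ℝ w).continuous_of_finiteDimensional
  obtain ⟨f, u, hf0, hfK⟩ :=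
    geometric_hahn_banach_point_closed ((convex_stdSimplex ℝ ι).linear_image _) hK.isClosed h0
  refine Or.inl ⟨f, fun i => ?_⟩
  have hi : w i ∈ K := ⟨Pi.single i 1, single_mem_stdSimplex ℝ i, by simp⟩
  linarith [hfK _ hi, map_zero f]

lemma extremePoints_zonotope_subset [T2Space E] [Fintype ι] {v : ι → E} (hv : ∀ i, v i ≠ 0) :
    (zonotope v).extremePoints ℝ ⊆ (fun S => ∑ i ∈ S, v i) '' signPatterns v univ := by
  classical
  rintro _ hx
  obtain ⟨t, ht, rfl⟩ := hx.1
  have ht01 i := eq_zero_or_eq_one_of_sum_smul_mem_extremePoints ht hx (hv i)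
  obtain ⟨f, hf⟩ | ⟨μ, hμ, hμ0⟩ :=
    exists_forall_pos_or_exists_stdSimplex fun i => (2 * t i - 1) • v i
  · have hft i : t i = if 0 < f (v i) then 1 else 0 := by
      have := hf i
      rw [map_smul, smul_eq_mul] at this
      rcases ht01 i with h | h <;> simp only [h] at this ⊢ <;> split_ifs <;> linarith
    refine ⟨_, ⟨f, fun i _ h0 => by simpa [h0] using hf i, rfl⟩, ?_⟩
    simp only [sum_filter_eq_sum_ite_smul, hft]
  obtain ⟨j, hj⟩ : ∃ j, 0 < μ j := by
    by_contra! h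
    have : ∑ i, μ i = 0 := sum_eq_zero fun i _ => (h i).antisymm (hμ.1 i)
    linarith [hμ.2]
  have hμ1 i : μ i ≤ 1 := (mem_Icc_of_mem_stdSimplex hμ i).2
  -- Subtracting half of the vanishing combination `μ` keeps the point but makes `t j` fractional.
  set t' := fun i => t i - μ i * (2 * t i - 1) / 2
  have ht'01 i : 0 ≤ t' i ∧ t' i ≤ 1 := by
    rcases ht01 i with h | h <;> simp only [t', h] <;> constructor <;> linarith [hμ.1 i, hμ1 i]
  have hx' : ∑ i, t' i • v i = ∑ i, t i • v i - (2 : ℝ)⁻¹ • ∑ i, μ i • (2 * t i - 1) • v i := by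
    rw [smul_sum, ← sum_sub_distrib]
    exact sum_congr rfl fun i _ => by simp only [t']; module
  rw [hμ0, smul_zero, sub_zero] at hx'
  have := eq_zero_or_eq_one_of_sum_smul_mem_extremePoints ht'01 (hx' ▸ hx) (hv j)
  rcases ht01 j with h | h <;> simp only [t', h] at this <;> rcases this with h' | h' <;>
    linarith [hμ1 j]

lemma extremePoints_zonotope [T2Space E] [Fintype ι] {v : ι → E} (hv : ∀ i, v i ≠ 0) :
    (zonotope v).extremePoints ℝ = (fun S => ∑ i ∈ S, v i) '' signPatterns v univ := by
  refine (extremePoints_zonotope_subset hv).antisymm ?_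
  rintro _ ⟨_, ⟨f, hf, rfl⟩, rfl⟩
  exact exposedPoints_subset_extremePoints
    (sum_filter_pos_mem_exposedPoints fun i => hf i (mem_univ i))

variable [T1Space E]

lemma exists_apply_pos {x : E} (hx : x ≠ 0) : ∃ g : StrongDual ℝ E, 0 < g x := by
  obtain ⟨g, hg⟩ := geometric_hahn_banach_point_point hx.symm
  exact ⟨g, by simpa using hg⟩

lemma signPatterns_singleton {v : ι → E} {a : ι} (ha : v a ≠ 0) :
    signPatterns v {a} = {{a}, ∅} := by
  obtain ⟨g, hg⟩ := exists_apply_pos ha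
  ext S
  constructor
  · rintro ⟨f, -, rfl⟩
    simpa [or_comm] using subset_singleton_iff.1 (filter_subset (fun i => 0 < f (v i)) {a})
  · rintro (rfl | rfl)
    · exact ⟨g, by simpa using hg.ne', by simp [hg]⟩
    · exact ⟨-g, by simpa using hg.ne', by simp [hg.le]⟩

lemma signPatternsPosAt_union_neg {v : ι → E} {s : Finset ι} {x : E} (hx : x ≠ 0) :
    signPatternsPosAt v s x ∪ signPatternsPosAt v s (-x) = signPatterns v s := by
  obtain ⟨g, hg⟩ := exists_apply_pos hx
  refine (Set.union_subset (signPatternsPosAt_subset s x)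
    (signPatternsPosAt_subset s (-x))).antisymm ?_
  rintro _ ⟨f, hf, rfl⟩
  rcases le_total 0 (f x) with hfx | hfx
  · exact Or.inl (filter_pos_mem_signPatternsPosAt hf hfx hg)
  · exact Or.inr (filter_pos_mem_signPatternsPosAt (g := -g) hf (by simpa using hfx)
      (by simpa using hg))

end HahnBanach

section Plane

def crossForm (p : ℝ × ℝ) : StrongDual ℝ (ℝ × ℝ) :=
  p.1 • ContinuousLinearMap.snd ℝ ℝ ℝ - p.2 • ContinuousLinearMap.fst ℝ ℝ ℝ

@[simp]
lemma crossForm_apply (p q : ℝ × ℝ) : crossForm p q = p.1 * q.2 - p.2 * q.1 := rfl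

lemma crossForm_self (p : ℝ × ℝ) : crossForm p p = 0 := by
  rw [crossForm_apply]; ring

lemma exists_eq_smul_of_crossForm_eq_zero {p q : ℝ × ℝ} (hp : p ≠ 0) (h : crossForm p q = 0) :
    ∃ c : ℝ, q = c • p := by
  rcases p with ⟨p₁, p₂⟩
  rcases q with ⟨q₁, q₂⟩
  rw [crossForm_apply] at h
  by_cases h₁ : p₁ = 0
  · subst h₁
    have h₂ : p₂ ≠ 0 := fun h₂ => hp (by simp [h₂])
    have hq₁ : q₁ = 0 := by simpa [h₂] using h
    exact ⟨q₂ / p₂, by simp [hq₁, h₂]⟩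
  · refine ⟨q₁ / p₁, Prod.ext (by simp [h₁]) ?_⟩
    simp only [Prod.smul_mk, smul_eq_mul]
    field_simp
    linarith

lemma apply_eq_fst_mul_add_snd_mul (f : StrongDual ℝ (ℝ × ℝ)) (x : ℝ × ℝ) :
    f x = x.1 * f (1, 0) + x.2 * f (0, 1) := by
  have hx : x = x.1 • ((1 : ℝ), (0 : ℝ)) + x.2 • ((0 : ℝ), (1 : ℝ)) := by ext <;> simp
  conv_lhs => rw [hx]
  rw [map_add, map_smul, map_smul, smul_eq_mul, smul_eq_mul]

lemma exists_eq_smul_crossForm_of_apply_eq_zero {p : ℝ × ℝ} (hp : p ≠ 0)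
    {f : StrongDual ℝ (ℝ × ℝ)} (h : f p = 0) : ∃ c : ℝ, f = c • crossForm p := by
  obtain ⟨c, hc⟩ := exists_eq_smul_of_crossForm_eq_zero (q := (f (0, 1), -f (1, 0))) hp
    (by rw [apply_eq_fst_mul_add_snd_mul] at h; rw [crossForm_apply]; linarith)
  simp only [Prod.ext_iff, Prod.smul_fst, Prod.smul_snd, smul_eq_mul] at hc
  refine ⟨c, ContinuousLinearMap.ext fun x => ?_⟩
  rw [apply_eq_fst_mul_add_snd_mul, show f (1, 0) = -(c * p.2) by linarith [hc.2], hc.1,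
    _root_.smul_apply, crossForm_apply, smul_eq_mul]
  ring

lemma signPatternsPosAt_inter_neg {v : ι → ℝ × ℝ} {s : Finset ι} {p : ℝ × ℝ} (hp : p ≠ 0)
    (hs : s.Nonempty) (hv : ∀ i ∈ s, crossForm p (v i) ≠ 0) :
    signPatternsPosAt v s p ∩ signPatternsPosAt v s (-p) =
      {{i ∈ s | 0 < crossForm p (v i)}, {i ∈ s | 0 < -crossForm p (v i)}} := by
  obtain ⟨g, hg⟩ := exists_apply_pos hp
  have hv' : ∀ i ∈ s, (-crossForm p) (v i) ≠ 0 := fun i hi => neg_ne_zero.2 (hv i hi)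
  refine subset_antisymm ?_ ?_
  · rintro _ ⟨⟨f₁, hf₁, h₁, rfl⟩, ⟨f₂, hf₂, h₂, h₁₂⟩⟩
    set f₀ := f₂ (-p) • f₁ + f₁ p • f₂
    have hf₀p : f₀ p = 0 := by
      simp only [f₀, _root_.add_apply, _root_.smul_apply, smul_eq_mul, map_neg]
      ring
    have hsame := forall_mul_pos_of_filter_pos_eq hf₁ hf₂ h₁₂.symm
    have hf₁₀ : ∀ i ∈ s, 0 < f₁ (v i) * f₀ (v i) := fun i hi => by
      simp only [f₀, _root_.add_apply, _root_.smul_apply, smul_eq_mul]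
      nlinarith [mul_pos h₂ (mul_self_pos.2 (hf₁ i hi)), mul_pos h₁ (hsame i hi)]
    rw [← filter_pos_eq_of_forall_mul_pos hf₁₀]
    obtain ⟨c, hc⟩ := exists_eq_smul_crossForm_of_apply_eq_zero hp hf₀p
    rcases lt_trichotomy c 0 with hc0 | rfl | hc0
    · refine Or.inr (filter_pos_eq_of_forall_mul_pos fun i hi => ?_)
      rw [hc, _root_.smul_apply, smul_eq_mul]
      nlinarith [mul_self_pos.2 (hv i hi)]
    · obtain ⟨i, hi⟩ := hs
      simpa [hc] using hf₁₀ i hi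
    · refine Or.inl (filter_pos_eq_of_forall_mul_pos fun i hi => ?_)
      rw [hc, _root_.smul_apply, smul_eq_mul]
      nlinarith [mul_self_pos.2 (hv i hi)]
  · have hboth {f : StrongDual ℝ (ℝ × ℝ)} (hf : ∀ i ∈ s, f (v i) ≠ 0) (hfp : f p = 0) :
        {i ∈ s | 0 < f (v i)} ∈ signPatternsPosAt v s p ∩ signPatternsPosAt v s (-p) :=
      ⟨filter_pos_mem_signPatternsPosAt hf hfp.ge hg,
        filter_pos_mem_signPatternsPosAt (g := -g) hf (by simp [hfp]) (by simpa using hg)⟩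
    rintro _ (rfl | rfl)
    · exact hboth hv (crossForm_self p)
    · exact hboth hv' (neg_eq_zero.2 (crossForm_self p))

lemma ncard_signPatterns [DecidableEq ι] {v : ι → ℝ × ℝ} {I : Finset ι} (hI : I.Nonempty)
    (hv : ∀ i ∈ I, v i ≠ 0) (hpar : ∀ i ∈ I, ∀ j ∈ I, i ≠ j → ¬∃ c : ℝ, v i = c • v j) :
    (signPatterns v I).ncard = 2 * #I := by
  induction hI using Nonempty.cons_induction with
  | singleton a =>
    rw [signPatterns_singleton (hv a (mem_singleton_self a)), Set.ncard_pair (singleton_ne_empty a),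
      card_singleton]
  | cons a s ha hs ih =>
    have hva : v a ≠ 0 := hv a (mem_cons_self a s)
    have hcross : ∀ i ∈ s, crossForm (v a) (v i) ≠ 0 := fun i hi h =>
      hpar i (mem_cons_of_mem hi) a (mem_cons_self a s) (ne_of_mem_of_not_mem hi ha)
        (exists_eq_smul_of_crossForm_eq_zero hva h)
    have hfin (x : ℝ × ℝ) := (signPatterns_finite v s).subset (signPatternsPosAt_subset s x)
    have key := Set.ncard_union_add_ncard_inter _ _ (hfin (v a)) (hfin (-v a))
    rw [signPatternsPosAt_union_neg hva, signPatternsPosAt_inter_neg hva hs hcross,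
      Set.ncard_pair (filter_pos_ne_filter_neg_pos hs hcross),
      ih (fun i hi => hv i (mem_cons_of_mem hi))
        (fun i hi j hj => hpar i (mem_cons_of_mem hi) j (mem_cons_of_mem hj))] at key
    rw [ncard_signPatterns_cons, ← key, card_cons]
    ring

end Plane

/-- A planar zonotope generated by `n ≥ 1` nonzero, pairwise non-parallel vectors is a
polygon with exactly `2·n` vertices: its set of extreme points is finite of cardinality
`2·n`. -/
theorem zonotope_extremePoints_card (n : ℕ) (hn : 1 ≤ n) (v : Fin n → ℝ × ℝ)
    (hv0 : ∀ i, v i ≠ 0)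
    (hpar : ∀ i j, i ≠ j → ¬ ∃ c : ℝ, v i = c • v j) :
    (Set.extremePoints ℝ
        { z : ℝ × ℝ | ∃ t : Fin n → ℝ, (∀ i, 0 ≤ t i ∧ t i ≤ 1) ∧ z = ∑ i, t i • v i }).Finite ∧
    (Set.extremePoints ℝ
        { z : ℝ × ℝ | ∃ t : Fin n → ℝ, (∀ i, 0 ≤ t i ∧ t i ≤ 1) ∧ z = ∑ i, t i • v i }).ncard
      = 2 * n := by
  change ((zonotope v).extremePoints ℝ).Finite ∧ ((zonotope v).extremePoints ℝ).ncard = 2 * n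
  rw [extremePoints_zonotope hv0]
  refine ⟨(signPatterns_finite v univ).image _, ?_⟩
  rw [injOn_sum_signPatterns.ncard_image,
    ncard_signPatterns (univ_nonempty_iff.2 ⟨⟨0, hn⟩⟩) (fun i _ => hv0 i) (fun i _ j _ => hpar i j),
    card_univ, Fintype.card_fin]
end
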